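/- Let H denote the group presented by generators b, c subject to the relations bcb = cbc, b²c² is central (i.e. b²c² commutes with b and with c), and (b²c²)² = 1. Then H is a nonabelian group of order 24, isomorphic to a semidirect product ℤ/3 ⋊ ℤ/8, in which b·c⁻¹ = (bc)⁴ generates the normal subgroup of order 3 and b generates a cyclic subgroup of order 8. -/

import Mathlib

open scoped Pointwise

/-- Relations of `H = ⟨b,c ∣ bcb = cbc, b²c² central, (b²c²)² = 1⟩`
(generators `b = 0`, `c = 1`). -/
def Hrels : Set (FreeGroup (Fin 2)) :=
  let b : FreeGroup (Fin 2) := FreeGroup.of 0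
  let c : FreeGroup (Fin 2) := FreeGroup.of 1
  { b * c * b * (c * b * c)⁻¹,
    (b ^ 2 * c ^ 2) * b * (b * (b ^ 2 * c ^ 2))⁻¹,
    (b ^ 2 * c ^ 2) * c * (c * (b ^ 2 * c ^ 2))⁻¹,
    (b ^ 2 * c ^ 2) ^ 2 }

abbrev Hgrp := PresentedGroup Hrels

/- ### Auxiliary lemmas -/

/-- Generic algebraic consequences of the relations. -/
theorem Hrels_derive_all {G : Type*} [Group G] (x y : G)
    (hb : x*y*x = y*x*y)
    (h2 : (x^2*y^2)*x = x*(x^2*y^2))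
    (h3 : (x^2*y^2)*y = y*(x^2*y^2))
    (h4 : (x^2*y^2)^2 = 1) :
    x^8 = 1 ∧ (x*y⁻¹)^3 = 1 ∧ x*y⁻¹ = (x*y)^4 ∧
      x*(x*y⁻¹)*x⁻¹ = (x*y⁻¹)⁻¹ ∧ y*(x*y⁻¹)*y⁻¹ = (x*y⁻¹)⁻¹ := by
  have hxy2 : x*y^2 = y^2*x := by
    have := mul_left_cancel (a := x^2) (show x^2*(y^2*x) = x^2*(x*y^2) by
      rw [show x^2*(y^2*x) = (x^2*y^2)*x from by simp [pow_succ, mul_assoc], h2]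
      simp [pow_succ, mul_assoc])
    exact this.symm
  have hyx2 : x^2*y = y*x^2 := by
    apply mul_right_cancel (b := y^2)
    rw [show (x^2*y)*y^2 = (x^2*y^2)*y from by simp [pow_succ, mul_assoc], h3]
    simp [pow_succ, mul_assoc]
  have hsq : x^2 = y^2 := by
    have e1 : y*(x^2*x) = y*(y^2*x) := by
      calc y*(x^2*x) = (y*x^2)*x := by simp [pow_succ, mul_assoc]
        _ = (x^2*y)*x := by rw [hyx2]
        _ = x*(x*y*x) := by simp [pow_succ, mul_assoc]
        _ = x*(y*x*y) := by rw [hb]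
        _ = (x*y*x)*y := by simp [pow_succ, mul_assoc]
        _ = (y*x*y)*y := by rw [hb]
        _ = y*(x*y^2) := by simp [pow_succ, mul_assoc]
        _ = y*(y^2*x) := by rw [hxy2]
    exact mul_right_cancel (mul_left_cancel e1)
  have hx8 : x^8 = 1 := by
    have h4' := h4
    rw [← hsq] at h4'
    rw [show x^8 = (x^2*x^2)^2 from by simp [pow_succ, mul_assoc], h4']
  have ht3 : (x*y)^3 = x^6 := by
    calc (x*y)^3 = x*(y*x*y)*(x*y) := by simp [pow_succ, mul_assoc]
      _ = x*(x*y*x)*(x*y) := by rw [hb]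
      _ = x^2*(y*x^2)*y := by simp [pow_succ, mul_assoc]
      _ = x^2*(x^2*y)*y := by rw [← hyx2]
      _ = x^4*y^2 := by simp [pow_succ, mul_assoc]
      _ = x^4*x^2 := by rw [← hsq]
      _ = x^6 := by simp [pow_succ, mul_assoc]
  have hT3 : x*y⁻¹ = (x*y)^4 := by
    have h47 : (x*y)^4 = x^7*y := by
      calc (x*y)^4 = (x*y)^3*(x*y) := by simp [pow_succ, mul_assoc]
        _ = x^6*(x*y) := by rw [ht3]
        _ = x^7*y := by simp [pow_succ, mul_assoc]
    rw [h47]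
    calc x*y⁻¹ = 1*(x*y⁻¹) := by simp [pow_succ, mul_assoc]
      _ = x^8*(x*y⁻¹) := by rw [hx8]
      _ = x^7*(x^2*y⁻¹) := by simp [pow_succ, mul_assoc]
      _ = x^7*(y^2*y⁻¹) := by rw [hsq]
      _ = x^7*y := by simp [pow_succ, mul_assoc]
  have hT1 : (x*y⁻¹)^3 = 1 := by
    calc (x*y⁻¹)^3 = ((x*y)^4)^3 := by rw [hT3]
      _ = ((x*y)^3)^4 := by simp [pow_succ, mul_assoc]
      _ = (x^6)^4 := by rw [ht3]
      _ = (x^8)^3 := by simp [pow_succ, mul_assoc]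
      _ = 1 := by rw [hx8, one_pow]
  have hT4 : x*(x*y⁻¹)*x⁻¹ = (x*y⁻¹)⁻¹ := by
    calc x*(x*y⁻¹)*x⁻¹ = x^2*y⁻¹*x⁻¹ := by simp [pow_succ, mul_assoc]
      _ = y^2*y⁻¹*x⁻¹ := by rw [hsq]
      _ = (x*y⁻¹)⁻¹ := by simp [pow_succ, mul_assoc]
  have hT5 : y*(x*y⁻¹)*y⁻¹ = (x*y⁻¹)⁻¹ := by
    calc y*(x*y⁻¹)*y⁻¹ = y*x*(y^2)⁻¹ := by simp [pow_succ, mul_assoc]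
      _ = y*x*(x^2)⁻¹ := by rw [← hsq]
      _ = (x*y⁻¹)⁻¹ := by simp [pow_succ, mul_assoc]
  exact ⟨hx8, hT1, hT3, hT4, hT5⟩

lemma Hrels_cases {r : FreeGroup (Fin 2)} (hr : r ∈ Hrels) :
    r = FreeGroup.of 0 * FreeGroup.of 1 * FreeGroup.of 0 *
        (FreeGroup.of 1 * FreeGroup.of 0 * FreeGroup.of 1)⁻¹ ∨
    r = ((FreeGroup.of 0) ^ 2 * (FreeGroup.of 1) ^ 2) * FreeGroup.of 0 *
        (FreeGroup.of 0 * ((FreeGroup.of 0) ^ 2 * (FreeGroup.of 1) ^ 2))⁻¹ ∨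
    r = ((FreeGroup.of 0) ^ 2 * (FreeGroup.of 1) ^ 2) * FreeGroup.of 1 *
        (FreeGroup.of 1 * ((FreeGroup.of 0) ^ 2 * (FreeGroup.of 1) ^ 2))⁻¹ ∨
    r = ((FreeGroup.of 0) ^ 2 * (FreeGroup.of 1) ^ 2) ^ 2 := by
  simpa [Hrels, Set.mem_insert_iff] using hr

lemma Hrels_mem1 : (FreeGroup.of 0 * FreeGroup.of 1 * FreeGroup.of 0 *
    (FreeGroup.of 1 * FreeGroup.of 0 * FreeGroup.of 1)⁻¹ : FreeGroup (Fin 2)) ∈ Hrels := by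
  simp [Hrels]

lemma Hrels_mem2 : (((FreeGroup.of 0) ^ 2 * (FreeGroup.of 1) ^ 2) * FreeGroup.of 0 *
    (FreeGroup.of 0 * ((FreeGroup.of 0) ^ 2 * (FreeGroup.of 1) ^ 2))⁻¹ :
      FreeGroup (Fin 2)) ∈ Hrels := by
  simp [Hrels]

lemma Hrels_mem3 : (((FreeGroup.of 0) ^ 2 * (FreeGroup.of 1) ^ 2) * FreeGroup.of 1 *
    (FreeGroup.of 1 * ((FreeGroup.of 0) ^ 2 * (FreeGroup.of 1) ^ 2))⁻¹ :
      FreeGroup (Fin 2)) ∈ Hrels := by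
  simp [Hrels]

lemma Hrels_mem4 :
    ((((FreeGroup.of 0) ^ 2 * (FreeGroup.of 1) ^ 2)) ^ 2 : FreeGroup (Fin 2)) ∈ Hrels := by
  simp [Hrels]

lemma Hgrp_mk_rel {r : FreeGroup (Fin 2)} (h : r ∈ Hrels) : PresentedGroup.mk Hrels r = 1 :=
  (QuotientGroup.eq_one_iff r).mpr (Subgroup.subset_normalClosure h)

lemma Hgrp_rel_b : (PresentedGroup.of 0 * PresentedGroup.of 1 * PresentedGroup.of 0 : Hgrp)
    = PresentedGroup.of 1 * PresentedGroup.of 0 * PresentedGroup.of 1 := by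
  have h := Hgrp_mk_rel Hrels_mem1
  simp only [map_mul, map_inv] at h
  exact mul_inv_eq_one.mp h

lemma Hgrp_rel_2 : ((PresentedGroup.of 0 : Hgrp)^2 * (PresentedGroup.of 1)^2) * PresentedGroup.of 0
    = PresentedGroup.of 0 * ((PresentedGroup.of 0)^2 * (PresentedGroup.of 1)^2) := by
  have h := Hgrp_mk_rel Hrels_mem2
  simp only [map_mul, map_inv, map_pow] at h
  exact mul_inv_eq_one.mp h

lemma Hgrp_rel_3 : ((PresentedGroup.of 0 : Hgrp)^2 * (PresentedGroup.of 1)^2) * PresentedGroup.of 1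
    = PresentedGroup.of 1 * ((PresentedGroup.of 0)^2 * (PresentedGroup.of 1)^2) := by
  have h := Hgrp_mk_rel Hrels_mem3
  simp only [map_mul, map_inv, map_pow] at h
  exact mul_inv_eq_one.mp h

lemma Hgrp_rel_4 : (((PresentedGroup.of 0 : Hgrp))^2 * ((PresentedGroup.of 1))^2)^2 = 1 := by
  have h := Hgrp_mk_rel Hrels_mem4
  simp only [map_mul, map_pow] at h
  exact h

def fS3fun : Fin 2 → Equiv.Perm (Fin 3) := ![Equiv.swap 0 1, Equiv.swap 1 2]

lemma fS3cond : ∀ r ∈ Hrels, FreeGroup.lift fS3fun r = 1 := by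
  intro r hr
  rcases Hrels_cases hr with rfl | rfl | rfl | rfl <;>
    · simp only [map_mul, map_inv, map_pow, FreeGroup.lift_apply_of]
      decide

/-- The homomorphism onto `S₃`. -/
def fS3 : Hgrp →* Equiv.Perm (Fin 3) := PresentedGroup.toGroup fS3cond

def fZ8fun : Fin 2 → Multiplicative (ZMod 8) := fun _ => Multiplicative.ofAdd 1

lemma fZ8cond : ∀ r ∈ Hrels, FreeGroup.lift fZ8fun r = 1 := by
  intro r hr
  rcases Hrels_cases hr with rfl | rfl | rfl | rfl <;>
    · simp only [map_mul, map_inv, map_pow, FreeGroup.lift_apply_of]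
      decide

/-- The homomorphism onto `ℤ/8`. -/
def fZ8 : Hgrp →* Multiplicative (ZMod 8) := PresentedGroup.toGroup fZ8cond

lemma conj_zpow_eq {G : Type*} [Group G] {a u : G} (hu : u*a*u⁻¹ = a⁻¹) (k : ℤ) :
    u*(a^k)*u⁻¹ = a^(-k) := by
  calc u*(a^k)*u⁻¹ = (u*a*u⁻¹)^k := (conj_zpow).symm
    _ = (a⁻¹)^k := by rw [hu]
    _ = a^(-k) := by rw [inv_zpow, ← zpow_neg]

lemma mem_normalizer_of_conj {G : Type*} [Group G] {a g : G} (h : g*a*g⁻¹ = a⁻¹) :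
    g ∈ Subgroup.normalizer (Subgroup.zpowers a : Set G) := by
  have h1 : g*a⁻¹*g⁻¹ = a := by simpa using conj_zpow_eq h (-1)
  have hg' : g⁻¹*a*(g⁻¹)⁻¹ = a⁻¹ := by
    rw [inv_inv]
    calc g⁻¹*a*g = g⁻¹*(g*a⁻¹*g⁻¹)*g := by rw [h1]
      _ = a⁻¹ := by simp [mul_assoc]
  rw [Subgroup.mem_normalizer_iff]
  intro h'
  simp only [Subgroup.mem_zpowers_iff]
  constructor
  · rintro ⟨k, rfl⟩
    exact ⟨-k, (conj_zpow_eq h k).symm⟩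
  · rintro ⟨k, hk⟩
    refine ⟨-k, ?_⟩
    have h2 := conj_zpow_eq hg' k
    rw [inv_inv] at h2
    calc a^(-k) = g⁻¹*(a^k)*g := h2.symm
      _ = g⁻¹*(g*h'*g⁻¹)*g := by rw [hk]
      _ = h' := by simp [mul_assoc]

/-- `H` is a nonabelian group of order 24, an internal semidirect product `ℤ/3 ⋊ ℤ/8`:
`b c⁻¹ = (bc)⁴` generates the normal subgroup of order 3 and `b` generates a cyclic
subgroup of order 8. -/
theorem Hgrp_is_Z3_semidirect_Z8 :
    (¬ ∀ x y : Hgrp, x * y = y * x) ∧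
    Nat.card Hgrp = 24 ∧
    (PresentedGroup.of 0 * (PresentedGroup.of 1)⁻¹ : Hgrp) =
      (PresentedGroup.of 0 * PresentedGroup.of 1) ^ 4 ∧
    (Subgroup.zpowers (PresentedGroup.of 0 * (PresentedGroup.of 1)⁻¹ : Hgrp)).Normal ∧
    Nat.card (Subgroup.zpowers (PresentedGroup.of 0 * (PresentedGroup.of 1)⁻¹ : Hgrp)) = 3 ∧
    Nat.card (Subgroup.zpowers (PresentedGroup.of 0 : Hgrp)) = 8 ∧
    Subgroup.zpowers (PresentedGroup.of 0 * (PresentedGroup.of 1)⁻¹ : Hgrp) ⊓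
      Subgroup.zpowers (PresentedGroup.of 0 : Hgrp) = ⊥ ∧
    Subgroup.zpowers (PresentedGroup.of 0 * (PresentedGroup.of 1)⁻¹ : Hgrp) ⊔
      Subgroup.zpowers (PresentedGroup.of 0 : Hgrp) = ⊤ := by
  set x : Hgrp := PresentedGroup.of 0 with hx_def
  set y : Hgrp := PresentedGroup.of 1 with hy_def
  obtain ⟨hx8, ha3, hT3, hcx, hcy⟩ :=
    Hrels_derive_all x y Hgrp_rel_b Hgrp_rel_2 Hgrp_rel_3 Hgrp_rel_4
  set a : Hgrp := x * y⁻¹ with ha_def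
  set H3 : Subgroup Hgrp := Subgroup.zpowers a with hH3_def
  set H8 : Subgroup Hgrp := Subgroup.zpowers x with hH8_def
  -- images under the two homomorphisms
  have hfx : fS3 x = Equiv.swap 0 1 := PresentedGroup.toGroup.of fS3cond
  have hfy : fS3 y = Equiv.swap 1 2 := PresentedGroup.toGroup.of fS3cond
  have hgx : fZ8 x = Multiplicative.ofAdd 1 := PresentedGroup.toGroup.of fZ8cond
  -- noncommutativity
  have hnc : x * y ≠ y * x := by
    intro he
    have := congrArg fS3 he
    rw [map_mul, map_mul, hfx, hfy] at this
    exact (by decide : Equiv.swap (0:Fin 3) 1 * Equiv.swap 1 2 ≠ Equiv.swap 1 2 * Equiv.swap 0 1) this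
  -- a ≠ 1
  have ha1 : a ≠ 1 := by
    intro he
    have := congrArg fS3 he
    rw [ha_def, map_mul, map_inv, map_one, hfx, hfy] at this
    exact (by decide : Equiv.swap (0:Fin 3) 1 * (Equiv.swap 1 2)⁻¹ ≠ 1) this
  -- orders
  haveI : Fact (Nat.Prime 3) := ⟨by norm_num⟩
  have hoa : orderOf a = 3 := orderOf_eq_prime ha3 ha1
  have hox : orderOf x = 8 := by
    refine Nat.dvd_antisymm (orderOf_dvd_of_pow_eq_one hx8) ?_
    have h1 := orderOf_map_dvd fZ8 x
    rwa [hgx, orderOf_ofAdd_eq_addOrderOf, ZMod.addOrderOf_one] at h1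
  have hcard3 : Nat.card H3 = 3 := by rw [hH3_def, Nat.card_zpowers, hoa]
  have hcard8 : Nat.card H8 = 8 := by rw [hH8_def, Nat.card_zpowers, hox]
  -- normality
  have hnorm : H3.Normal := by
    rw [← Subgroup.normalizer_eq_top_iff, eq_top_iff, ← PresentedGroup.closure_range_of Hrels,
      Subgroup.closure_le]
    rintro _ ⟨i, rfl⟩
    fin_cases i
    · exact mem_normalizer_of_conj hcx
    · exact mem_normalizer_of_conj hcy
  -- intersection
  have hinf : H3 ⊓ H8 = ⊥ := by
    apply Subgroup.inf_eq_bot_of_coprime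
    rw [hcard3, hcard8]
    decide
  -- sup
  have hsup : H3 ⊔ H8 = ⊤ := by
    rw [eq_top_iff, ← PresentedGroup.closure_range_of Hrels, Subgroup.closure_le]
    rintro _ ⟨i, rfl⟩
    fin_cases i
    · exact Subgroup.mem_sup_right (Subgroup.mem_zpowers _)
    · have hy' : (PresentedGroup.of 1 : Hgrp) = a⁻¹ * x := by
        rw [ha_def]; simp [mul_assoc]; rfl
      have hmem : (PresentedGroup.of 1 : Hgrp) ∈ H3 ⊔ H8 := by
        rw [hy']
        exact mul_mem (inv_mem (Subgroup.mem_sup_left (Subgroup.mem_zpowers _)))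
          (Subgroup.mem_sup_right (Subgroup.mem_zpowers _))
      exact hmem
  -- cardinality via the product bijection
  have hcard : Nat.card Hgrp = 24 := by
    haveI := hnorm
    have hbij : Function.Bijective (fun p : H3 × H8 => (p.1 : Hgrp) * (p.2 : Hgrp)) := by
      constructor
      · rintro ⟨⟨u, hu⟩, ⟨v, hv⟩⟩ ⟨⟨u', hu'⟩, ⟨v', hv'⟩⟩ he
        simp only at he
        have h1 : u'⁻¹ * u = v' * v⁻¹ := by
          apply mul_left_cancel (a := u'); apply mul_right_cancel (b := v)
          simpa [mul_assoc] using he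
        have hmem : u'⁻¹ * u ∈ H3 ⊓ H8 := Subgroup.mem_inf.mpr
          ⟨mul_mem (inv_mem hu') hu, h1 ▸ mul_mem hv' (inv_mem hv)⟩
        rw [hinf, Subgroup.mem_bot] at hmem
        have huu : u = u' := by
          have := inv_mul_eq_one.mp hmem
          exact this.symm
        have hvv : v = v' := by
          apply mul_left_cancel (a := u)
          rw [he, huu]
        simp [Prod.ext_iff, Subtype.ext_iff, huu, hvv]
      · intro g
        have hg : g ∈ H3 ⊔ H8 := hsup ▸ Subgroup.mem_top g
        have hg' : g ∈ ((H3 : Set Hgrp) * (H8 : Set Hgrp)) := by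
          rw [← Subgroup.normal_mul]; exact hg
        obtain ⟨u, hu, v, hv, huv⟩ := Set.mem_mul.mp hg'
        exact ⟨(⟨u, hu⟩, ⟨v, hv⟩), huv⟩
    have := Nat.card_eq_of_bijective _ hbij
    rw [← this, Nat.card_prod, hcard3, hcard8]
  exact ⟨fun h => hnc (h x y), hcard, hT3, hnorm, hcard3, hcard8, hinf, hsup⟩
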